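/- For every 1 ≤ p < ∞ there exists a σ-finite measure μ on (ℤ,𝒫(ℤ)) such that the shift f : i ↦ i+1 satisfies (1/2)·μ(B) ≤ μ(f(B)) ≤ 2·μ(B) for every B ⊆ ℤ (so that both T_f and T_{f^{-1}} = T_f^{-1} are well-defined continuous linear operators on L^p(ℤ,𝒫(ℤ),μ)), the composition operator T_f is Li-Yorke chaotic, and its inverse T_f^{-1} is not Li-Yorke chaotic. -/

import Mathlib

/-
Weight `ℤ` by `w i = 2^(-δ(-i))`, where `δ n` is the distance from `n` to the nearest square
(so `w = 1` on `ℕ`). Since `δ` is `1`-Lipschitz, neighbouring weights differ by a factor at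
most `2`, so both shifts are bounded composition operators on `L^p(ℤ, w · count)`.
Under `T_f` the unit mass at `0` moves to `-n` and has norm `w(-n)^(1/p)`, which is `1` when
`n` is a square and `2^(-k/p)` when `n = k² + k`; such an irregular vector makes `T_f`
Li-Yorke chaotic.
Under `T_f⁻¹` a vector `ψ` with `ψ j ≠ 0` moves to the right, where the weight stays at least
`2^(-|j|)`, so no nonzero orbit comes close to `0` and no pair of points is proximal.
-/

open MeasureTheory Filter Set Topology
open scoped ENNReal

noncomputable section

/-- A continuous self-map `g` of a metric space is *Li-Yorke chaotic* if there is an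
uncountable set `S` (a scrambled set) such that every pair of distinct points `x, y ∈ S`
satisfies `liminf dist (gⁿ x) (gⁿ y) = 0` and `limsup dist (gⁿ x) (gⁿ y) > 0`. -/
def LiYorkeChaotic {M : Type*} [PseudoMetricSpace M] (g : M → M) : Prop :=
  ∃ S : Set M, ¬ S.Countable ∧ ∀ x ∈ S, ∀ y ∈ S, x ≠ y →
    (∀ ε > 0, ∃ᶠ n in atTop, dist (g^[n] x) (g^[n] y) < ε) ∧
    (∃ ε > 0, ∃ᶠ n in atTop, ε < dist (g^[n] x) (g^[n] y))

open scoped NNReal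

section LinearDynamics

variable {E F : Type*} [NormedAddCommGroup E] [NormedSpace ℝ E] [FunLike F E E]
  [LinearMapClass F ℝ E E]

lemma iterate_map_smul (T : F) (n : ℕ) (a : ℝ) (x : E) : T^[n] (a • x) = a • T^[n] x := by
  induction n with
  | zero => rfl
  | succ n ih => rw [Function.iterate_succ_apply', Function.iterate_succ_apply', ih, map_smul]

-- The line `ℝ • x` is a scrambled set.
theorem liYorkeChaotic_of_irregular (T : F) (x : E)
    (h_small : ∀ ε > 0, ∃ᶠ n in atTop, ‖T^[n] x‖ < ε)
    (h_large : ∃ ε > 0, ∃ᶠ n in atTop, ε < ‖T^[n] x‖) :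
    LiYorkeChaotic T := by
  have hx : x ≠ 0 := by
    rintro rfl
    obtain ⟨ε, hε, h⟩ := h_large
    simpa [iterate_map_zero, hε.not_gt] using h.exists
  refine ⟨Set.range fun a : ℝ => a • x, fun h => ?_, ?_⟩
  · have := h.to_subtype
    exact not_countable
      (Set.rangeFactorization_injective.2 (smul_left_injective ℝ hx)).countable
  · rintro _ ⟨a, rfl⟩ _ ⟨b, rfl⟩ hab
    have hne : a - b ≠ 0 := sub_ne_zero.2 fun h => hab (by rw [h])
    have hdist : ∀ n, dist (T^[n] (a • x)) (T^[n] (b • x)) = |a - b| * ‖T^[n] x‖ :=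
      fun n => by
        rw [dist_eq_norm, ← iterate_map_sub, ← sub_smul, iterate_map_smul, norm_smul,
          Real.norm_eq_abs]
    simp only [hdist]
    refine ⟨fun ε hε => ?_, ?_⟩
    · exact (h_small (ε / |a - b|) (by positivity)).mono fun n hn => by
        rwa [lt_div_iff₀' (abs_pos.2 hne)] at hn
    · obtain ⟨ε, hε, h⟩ := h_large
      exact ⟨|a - b| * ε, by positivity, h.mono fun n hn => by gcongr⟩

theorem not_liYorkeChaotic_of_forall_ne_zero (T : F)
    (h : ∀ x ≠ 0, ∃ ε > 0, ∀ n, ε ≤ ‖T^[n] x‖) : ¬ LiYorkeChaotic T := by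
  rintro ⟨S, hS, hscr⟩
  obtain ⟨x, hx, y, hy, hxy⟩ := (not_subsingleton_iff.1 fun h => hS h.countable)
  obtain ⟨ε, hε, hbound⟩ := h (x - y) (sub_ne_zero.2 hxy)
  obtain ⟨n, hn⟩ := ((hscr x hx y hy hxy).1 ε hε).exists
  rw [dist_eq_norm, ← iterate_map_sub] at hn
  exact (hbound n).not_gt hn

end LinearDynamics

namespace MeasureTheory

variable {α : Type*} [MeasurableSpace α] {μ ν : Measure α}

lemma Measure.QuasiMeasurePreserving.of_map_le_smul {f : α → α} {c : ℝ≥0∞} (hf : Measurable f)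
    (hfμ : μ.map f ≤ c • μ) : Measure.QuasiMeasurePreserving f μ μ :=
  ⟨hf, Measure.absolutelyContinuous_of_le_smul hfμ⟩

variable [MeasurableSingletonClass α]

lemma Measure.le_of_forall_measure_singleton_le [Countable α] (h : ∀ a, μ {a} ≤ ν {a}) :
    μ ≤ ν :=
  Measure.le_iff.2 fun s hs => by
    rw [← Measure.tsum_indicator_apply_singleton μ s hs,
      ← Measure.tsum_indicator_apply_singleton ν s hs]
    exact ENNReal.tsum_le_tsum fun a => Set.indicator_le_indicator (h a)

lemma enorm_mul_measure_singleton_rpow_le_eLpNorm {E : Type*} [NormedAddCommGroup E]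
    {p : ℝ≥0∞} (hp0 : p ≠ 0) (hp : p ≠ ∞) (g : α → E) (a : α) :
    ‖g a‖ₑ * μ {a} ^ (1 / p.toReal) ≤ eLpNorm g p μ := by
  rw [← eLpNorm_indicator_const (measurableSet_singleton a) hp0 hp]
  refine eLpNorm_mono_enorm fun b => ?_
  by_cases hb : b = a
  · simp [hb]
  · simp [hb]

end MeasureTheory

namespace MeasureTheory.Lp

variable {α E : Type*} [MeasurableSpace α] {μ : Measure α} [NormedAddCommGroup E]
  [NormedSpace ℝ E] {p : ℝ≥0∞} [Fact (1 ≤ p)] {f : α → α} {c : ℝ≥0∞}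

def compOfMapLeSMul (hf : Measurable f) (hc : c ≠ ∞) (hfμ : μ.map f ≤ c • μ) :
    Lp E p μ →L[ℝ] Lp E p μ :=
  (compMeasurePreservingₗᵢ ℝ f ⟨hf, rfl⟩).toContinuousLinearMap.comp
    (LpToLpOfMeasureLeSMul hc hfμ)

variable (hf : Measurable f) (hc : c ≠ ∞) (hfμ : μ.map f ≤ c • μ)

lemma coeFn_compOfMapLeSMul (φ : Lp E p μ) :
    compOfMapLeSMul hf hc hfμ φ =ᵐ[μ] φ ∘ f :=
  (coeFn_compMeasurePreserving _ _).trans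
    (ae_eq_comp hf.aemeasurable (coeFn_LpToLpOfMeasureLeSMul hc hfμ φ))

lemma coeFn_iterate_compOfMapLeSMul (φ : Lp E p μ) (n : ℕ) :
    (compOfMapLeSMul hf hc hfμ)^[n] φ =ᵐ[μ] φ ∘ f^[n] := by
  induction n with
  | zero => rfl
  | succ n ih =>
    rw [Function.iterate_succ_apply', Function.iterate_succ, ← Function.comp_assoc]
    exact (coeFn_compOfMapLeSMul hf hc hfμ _).trans
      ((Measure.QuasiMeasurePreserving.of_map_le_smul hf hfμ).ae_eq ih)

lemma norm_iterate_compOfMapLeSMul_indicatorConstLp (hp : p ≠ ∞) {s : Set α}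
    (hs : MeasurableSet s) (hμs : μ s ≠ ∞) (x : E) (n : ℕ) :
    ‖(compOfMapLeSMul hf hc hfμ)^[n] (indicatorConstLp p hs hμs x)‖ =
      ‖x‖ * μ.real (f^[n] ⁻¹' s) ^ (1 / p.toReal) := by
  have hp0 : p ≠ 0 := (zero_lt_one.trans_le (Fact.out : 1 ≤ p)).ne'
  have hcomp : (compOfMapLeSMul hf hc hfμ)^[n] (indicatorConstLp p hs hμs x) =ᵐ[μ]
      (f^[n] ⁻¹' s).indicator fun _ => x :=
    (coeFn_iterate_compOfMapLeSMul hf hc hfμ _ n).trans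
      (((Measure.QuasiMeasurePreserving.of_map_le_smul hf hfμ).iterate n).ae_eq
        indicatorConstLp_coeFn)
  rw [Lp.norm_def, eLpNorm_congr_ae hcomp, eLpNorm_indicator_const (hf.iterate n hs) hp0 hp,
    ENNReal.toReal_mul, toReal_enorm, ← ENNReal.toReal_rpow, measureReal_def]

end MeasureTheory.Lp

def sqDist (n : ℕ) : ℕ := sInf (Set.range fun k : ℕ => Nat.dist n (k ^ 2))

lemma sqDist_le (n k : ℕ) : sqDist n ≤ Nat.dist n (k ^ 2) := Nat.sInf_le ⟨k, rfl⟩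

lemma exists_sqDist_eq (n : ℕ) : ∃ k, Nat.dist n (k ^ 2) = sqDist n :=
  Nat.sInf_mem (Set.range_nonempty _)

lemma sqDist_le_self (n : ℕ) : sqDist n ≤ n := by
  simpa [Nat.dist] using sqDist_le n 0

lemma sqDist_sq (k : ℕ) : sqDist (k ^ 2) = 0 :=
  Nat.le_zero.1 ((sqDist_le _ k).trans_eq (Nat.dist_self _))

lemma sqDist_le_add_dist (m n : ℕ) : sqDist m ≤ sqDist n + Nat.dist m n := by
  obtain ⟨k, hk⟩ := exists_sqDist_eq n
  calc sqDist m ≤ Nat.dist m (k ^ 2) := sqDist_le m k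
    _ ≤ Nat.dist m n + Nat.dist n (k ^ 2) := Nat.dist.triangle_inequality _ _ _
    _ = sqDist n + Nat.dist m n := by rw [hk, add_comm]

-- `k² + k` lies halfway between the consecutive squares `k²` and `(k + 1)² = k² + 2k + 1`.
lemma sqDist_sq_add_self (k : ℕ) : sqDist (k ^ 2 + k) = k := by
  refine le_antisymm ((sqDist_le _ k).trans (by simp only [Nat.dist]; omega)) ?_
  obtain ⟨j, hj⟩ := exists_sqDist_eq (k ^ 2 + k)
  rw [← hj]
  rcases le_or_gt j k with h | h
  · have : j ^ 2 ≤ k ^ 2 := Nat.pow_le_pow_left h 2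
    simp only [Nat.dist]; omega
  · have : (k + 1) ^ 2 ≤ j ^ 2 := Nat.pow_le_pow_left h 2
    simp only [Nat.dist, add_sq] at this ⊢; omega

-- `(-i).toNat = 0` for `i ≥ 0`, so the weight is `1` on the nonnegative integers.
def sqDistWeight (i : ℤ) : ℝ≥0 := 2⁻¹ ^ sqDist (-i).toNat

lemma sqDistWeight_le_two_mul {i j : ℤ} (hij : |i - j| ≤ 1) :
    sqDistWeight i ≤ 2 * sqDistWeight j := by
  have hD : sqDist (-j).toNat ≤ sqDist (-i).toNat + 1 :=
    (sqDist_le_add_dist _ _).trans (by gcongr; simp only [Nat.dist]; rw [abs_le] at hij; omega)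
  calc sqDistWeight i = 2 * 2⁻¹ ^ (sqDist (-i).toNat + 1) := by
        rw [sqDistWeight, pow_succ, mul_comm, mul_assoc, inv_mul_cancel₀ two_ne_zero, mul_one]
    _ ≤ 2 * sqDistWeight j := by gcongr; exact pow_le_pow_of_le_one (by norm_num) (by norm_num) hD

lemma sqDistWeight_neg_sq (k : ℕ) : sqDistWeight (-(k ^ 2 : ℕ)) = 1 := by
  simp only [sqDistWeight, neg_neg, Int.toNat_natCast, sqDist_sq, pow_zero]

lemma sqDistWeight_neg_sq_add_self (k : ℕ) : sqDistWeight (-(k ^ 2 + k : ℕ)) = 2⁻¹ ^ k := by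
  simp only [sqDistWeight, neg_neg, Int.toNat_natCast, sqDist_sq_add_self]

lemma inv_two_pow_natAbs_le_sqDistWeight_add (j : ℤ) (n : ℕ) :
    (2⁻¹ : ℝ≥0) ^ j.natAbs ≤ sqDistWeight (j + n) :=
  pow_le_pow_of_le_one (by norm_num) (by norm_num) ((sqDist_le_self _).trans (by omega))

def sqDistMeasure : Measure ℤ := Measure.count.withDensity fun i => sqDistWeight i

instance : SigmaFinite sqDistMeasure := SigmaFinite.withDensity _

lemma sqDistMeasure_singleton (a : ℤ) : sqDistMeasure {a} = sqDistWeight a := by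
  simp [sqDistMeasure, withDensity_apply _ (measurableSet_singleton a)]

lemma sqDistMeasure_singleton_ne_top (a : ℤ) : sqDistMeasure {a} ≠ ∞ := by
  simp [sqDistMeasure_singleton]

lemma sqDistMeasure_map_add_le {c : ℤ} (hc : |c| ≤ 1) :
    sqDistMeasure.map (· + c) ≤ (2 : ℝ≥0∞) • sqDistMeasure :=
  Measure.le_of_forall_measure_singleton_le fun a => by
    rw [Measure.map_apply (measurable_of_countable _) (measurableSet_singleton a),
      Set.preimage_add_right_singleton, Measure.smul_apply, sqDistMeasure_singleton,
      sqDistMeasure_singleton, smul_eq_mul]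
    exact_mod_cast sqDistWeight_le_two_mul (by rwa [add_sub_cancel_left, abs_neg])

lemma sqDistMeasure_image_add_one (B : Set ℤ) :
    sqDistMeasure B / 2 ≤ sqDistMeasure ((· + 1) '' B) ∧
      sqDistMeasure ((· + 1) '' B) ≤ 2 * sqDistMeasure B := by
  have hpre : ∀ c : ℤ, |c| ≤ 1 → ∀ s, sqDistMeasure ((· + c) ⁻¹' s) ≤ 2 * sqDistMeasure s :=
    fun c hc s => by
      simpa [Measure.map_apply (measurable_of_countable _) (.of_discrete)] using
        Measure.le_iff'.1 (sqDistMeasure_map_add_le hc) s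
  refine ⟨ENNReal.div_le_of_le_mul ?_, ?_⟩
  · have := hpre 1 le_rfl ((· + 1) '' B)
    rwa [Set.preimage_image_eq B (add_left_injective 1), mul_comm] at this
  · rw [Set.image_add_right]
    exact hpre (-1) (by simp) B

section Shift

variable (p : ℝ≥0∞) [Fact (1 ≤ p)]

def shiftLp {c : ℤ} (hc : |c| ≤ 1) : Lp ℝ p sqDistMeasure →L[ℝ] Lp ℝ p sqDistMeasure :=
  Lp.compOfMapLeSMul (measurable_of_countable _) ENNReal.ofNat_ne_top
    (sqDistMeasure_map_add_le hc)

def sqDistSingle (a : ℤ) : Lp ℝ p sqDistMeasure :=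
  indicatorConstLp p (measurableSet_singleton a) (sqDistMeasure_singleton_ne_top a) 1

lemma norm_iterate_shiftLp_one_sqDistSingle_zero (hp : p ≠ ∞) (n : ℕ) :
    ‖(shiftLp p (c := 1) le_rfl)^[n] (sqDistSingle p 0)‖ =
      (sqDistWeight (-n) : ℝ) ^ (1 / p.toReal) := by
  unfold shiftLp sqDistSingle
  rw [Lp.norm_iterate_compOfMapLeSMul_indicatorConstLp _ _ _ hp, add_right_iterate]
  simp [measureReal_def, sqDistMeasure_singleton]

theorem liYorkeChaotic_shiftLp_one (hp : p ≠ ∞) :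
    LiYorkeChaotic (shiftLp p (c := 1) le_rfl) := by
  have hp' : 0 < 1 / p.toReal :=
    one_div_pos.2 (ENNReal.toReal_pos (zero_lt_one.trans_le Fact.out).ne' hp)
  refine liYorkeChaotic_of_irregular _ (sqDistSingle p 0) (fun ε hε => ?_)
    ⟨1 / 2, by norm_num, ?_⟩
  all_goals simp only [norm_iterate_shiftLp_one_sqDistSingle_zero p hp]
  · have hsmall : Tendsto (fun k : ℕ => ((2⁻¹ : ℝ) ^ k) ^ (1 / p.toReal)) atTop (𝓝 0) := by
      have := (tendsto_pow_atTop_nhds_zero_of_lt_one (r := (2⁻¹ : ℝ)) (by norm_num)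
        (by norm_num)).rpow_const (Or.inr hp'.le)
      rwa [Real.zero_rpow hp'.ne'] at this
    refine (tendsto_atTop_mono (fun k => Nat.le_add_left k (k ^ 2)) tendsto_id).frequently
      ((hsmall.eventually (gt_mem_nhds hε)).mono fun k hk => ?_).frequently
    rw [sqDistWeight_neg_sq_add_self]
    simpa using hk
  · refine (tendsto_pow_atTop two_ne_zero).frequently
      (Eventually.of_forall fun k => ?_).frequently
    rw [sqDistWeight_neg_sq]
    norm_num

theorem not_liYorkeChaotic_shiftLp_neg_one (hp : p ≠ ∞) :
    ¬ LiYorkeChaotic (shiftLp p (c := -1) (by simp)) := by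
  have hp0 : p ≠ 0 := (zero_lt_one.trans_le Fact.out).ne'
  refine not_liYorkeChaotic_of_forall_ne_zero _ fun ψ hψ => ?_
  obtain ⟨j, hj⟩ : ∃ j, ψ j ≠ 0 := by
    by_contra! h
    exact hψ (Lp.eq_zero_iff_ae_eq_zero.2 (Eventually.of_forall h))
  set C : ℝ≥0∞ := ‖ψ j‖ₑ * ((2⁻¹ ^ j.natAbs : ℝ≥0) : ℝ≥0∞) ^ (1 / p.toReal)
  have hC0 : C ≠ 0 :=
    mul_ne_zero (enorm_ne_zero.2 hj) (ENNReal.rpow_pos (by simp) (by simp)).ne'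
  have hCtop : C ≠ ∞ :=
    ENNReal.mul_ne_top enorm_ne_top (ENNReal.rpow_ne_top_of_nonneg (by positivity) (by simp))
  refine ⟨C.toReal, ENNReal.toReal_pos hC0 hCtop, fun n => ?_⟩
  rw [Lp.norm_def]
  refine ENNReal.toReal_mono (Lp.eLpNorm_ne_top _) ?_
  rw [shiftLp, eLpNorm_congr_ae (Lp.coeFn_iterate_compOfMapLeSMul _ _ _ ψ n)]
  refine le_trans ?_ (enorm_mul_measure_singleton_rpow_le_eLpNorm hp0 hp _ (j + n))
  simp only [Function.comp_apply, add_right_iterate, sqDistMeasure_singleton]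
  rw [smul_neg, nsmul_one, add_neg_cancel_right]
  exact mul_le_mul_right (ENNReal.rpow_le_rpow
    (ENNReal.coe_le_coe.2 (inv_two_pow_natAbs_le_sqDistWeight_add j n)) (by positivity)) _

end Shift

/-- **Example (a Li-Yorke chaotic `T_f` whose inverse is not Li-Yorke chaotic).**
For every `1 ≤ p < ∞` there exists a σ-finite measure `μ` on `𝒫(ℤ)` such that the shift
`f : i ↦ i + 1` satisfies `(1/2)·μ(B) ≤ μ(f(B)) ≤ 2·μ(B)` for every `B ⊆ ℤ`, the
composition operator `T_f` on `L^p(ℤ, 𝒫(ℤ), μ)` is Li-Yorke chaotic, and its inverse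
`T_f⁻¹ = T_{f⁻¹}` is not Li-Yorke chaotic. -/
theorem exists_liYorke_shift_inverse_not_liYorke
    (p : ℝ≥0∞) [Fact (1 ≤ p)] (hp : p ≠ ∞) :
    ∃ μ : Measure ℤ, SigmaFinite μ ∧
      (∀ B : Set ℤ, μ B / 2 ≤ μ ((fun i : ℤ => i + 1) '' B) ∧
        μ ((fun i : ℤ => i + 1) '' B) ≤ 2 * μ B) ∧
      (∃ T : Lp ℝ p μ →L[ℝ] Lp ℝ p μ,
        (∀ φ : Lp ℝ p μ, ⇑(T φ) =ᵐ[μ] fun i => φ (i + 1)) ∧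
        LiYorkeChaotic (⇑T)) ∧
      (∃ S : Lp ℝ p μ →L[ℝ] Lp ℝ p μ,
        (∀ φ : Lp ℝ p μ, ⇑(S φ) =ᵐ[μ] fun i => φ (i - 1)) ∧
        ¬ LiYorkeChaotic (⇑S)) := by
  refine ⟨sqDistMeasure, inferInstance, sqDistMeasure_image_add_one,
    ⟨shiftLp p le_rfl, fun φ => Lp.coeFn_compOfMapLeSMul _ _ _ φ,
      liYorkeChaotic_shiftLp_one p hp⟩,
    ⟨shiftLp p (c := -1) (by simp), fun φ => Lp.coeFn_compOfMapLeSMul _ _ _ φ,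
      not_liYorkeChaotic_shiftLp_neg_one p hp⟩⟩
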